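/- arXiv:2108.09097 — 3 statements merged into one kernel-verified Lean document; each statement's English description precedes it below -/
import Mathlib

section
/- For every natural number n ≥ 1 and every natural number k: (1) Σ_{k̄ odd} C(n, k, k̄) = n · Σ_{k̄ ≥ 0} C(n−1, k, k̄); and (2) Σ_{k̄ even} C(n, k, k̄) = (n−1) · Σ_{k̄ ≥ 0} C(n−1, k, k̄) + Σ_{k̄ ≥ 0} C(n−1, k−1, k̄), where the last sum is interpreted as 0 when k = 0. (All sums over k̄ are finite since C(m, j, k̄) = 0 for j + k̄ > m.) -/
open Finset

attribute [local instance] Classical.propDecidable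

/-- LR minimum for a plain permutation. -/
def PLRMin {n : ℕ} (σ : Equiv.Perm (Fin n)) (t : Fin n) : Prop := ∀ s, s < t → σ t < σ s

noncomputable def pCnt {n : ℕ} (σ : Equiv.Perm (Fin n)) : ℕ :=
  Nat.card {t : Fin n // PLRMin σ t}

noncomputable def pGamma (n f : ℕ) : ℕ :=
  Nat.card {σ : Equiv.Perm (Fin n) // pCnt σ = f}

lemma pCnt_le {n : ℕ} (σ : Equiv.Perm (Fin n)) : pCnt σ ≤ n := by
  classical
  rw [pCnt, Nat.card_eq_fintype_card]
  calc Fintype.card {t : Fin n // PLRMin σ t} ≤ Fintype.card (Fin n) :=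
        Fintype.card_subtype_le _
    _ = n := Fintype.card_fin n

lemma pGamma_eq_zero_of_lt {n f : ℕ} (h : n < f) : pGamma n f = 0 := by
  rw [pGamma, Nat.card_eq_fintype_card, Fintype.card_eq_zero_iff]
  constructor
  rintro ⟨σ, hσ⟩
  exact absurd (hσ ▸ pCnt_le σ) (by omega)

lemma PLRMin_zero {n : ℕ} (σ : Equiv.Perm (Fin (n+1))) : PLRMin σ 0 := by
  intro s hs; exact absurd hs (Fin.not_lt_zero s)

lemma pCnt_pos {n : ℕ} (σ : Equiv.Perm (Fin (n+1))) : 0 < pCnt σ := by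
  rw [pCnt, Nat.card_eq_fintype_card, Fintype.card_pos_iff]
  exact ⟨⟨0, PLRMin_zero σ⟩⟩

lemma pGamma_zero_left (f : ℕ) : pGamma 0 f = if f = 0 then 1 else 0 := by
  classical
  rw [pGamma, Nat.card_eq_fintype_card]
  have hc : ∀ σ : Equiv.Perm (Fin 0), pCnt σ = 0 := by
    intro σ
    rw [pCnt, Nat.card_eq_fintype_card, Fintype.card_eq_zero_iff]
    exact ⟨fun t => t.1.elim0⟩
  split
  · next h =>
    subst h
    rw [Fintype.card_eq_one_iff]
    exact ⟨⟨1, hc 1⟩, fun y => Subtype.ext (by apply Subsingleton.elim)⟩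
  · next h =>
    rw [Fintype.card_eq_zero_iff]
    exact ⟨fun σ => h (σ.2 ▸ (hc σ.1).symm ▸ rfl)⟩

lemma pGamma_succ_zero (n : ℕ) : pGamma (n+1) 0 = 0 := by
  rw [pGamma, Nat.card_eq_fintype_card, Fintype.card_eq_zero_iff]
  exact ⟨fun σ => absurd σ.2 (by have := pCnt_pos σ.1; omega)⟩

def pIns {m : ℕ} (p : Fin (m+1)) (τ : Equiv.Perm (Fin m)) : Equiv.Perm (Fin (m+1)) :=
  (finSuccEquiv' p).trans ((Equiv.optionCongr τ).trans (finSuccEquiv' (Fin.last m)).symm)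
lemma pIns_self {m : ℕ} (p : Fin (m+1)) (τ : Equiv.Perm (Fin m)) :
    pIns p τ p = Fin.last m := by
  simp [pIns, finSuccEquiv'_at]
lemma pIns_succAbove {m : ℕ} (p : Fin (m+1)) (τ : Equiv.Perm (Fin m)) (i : Fin m) :
    pIns p τ (p.succAbove i) = (τ i).castSucc := by
  simp [pIns, finSuccEquiv'_succAbove]

lemma pIns_bijective (m : ℕ) :
    Function.Bijective (fun pτ : Fin (m+1) × Equiv.Perm (Fin m) => pIns pτ.1 pτ.2) := by
  constructor
  · rintro ⟨p, τ⟩ ⟨p', τ'⟩ h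
    simp only at h
    have hp : p = p' := by
      have h1 : pIns p τ p = Fin.last m := pIns_self p τ
      have h2 : pIns p' τ' p' = Fin.last m := pIns_self p' τ'
      rw [h] at h1
      exact (pIns p' τ').injective (h1.trans h2.symm)
    subst hp
    refine Prod.ext rfl ?_
    apply Equiv.ext
    intro i
    have h1 : pIns p τ (p.succAbove i) = pIns p τ' (p.succAbove i) := by rw [h]
    rw [pIns_succAbove, pIns_succAbove] at h1
    exact Fin.castSucc_injective m h1
  · intro σ
    set p := σ.symm (Fin.last m) with hp
    have hσp : σ p = Fin.last m := σ.apply_symm_apply _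
    have hne : ∀ i : Fin m, σ (p.succAbove i) ≠ Fin.last m := by
      intro i h
      exact Fin.succAbove_ne p i (σ.injective (h.trans hσp.symm))
    set g : Fin m → Fin m := fun i => (σ (p.succAbove i)).castPred (hne i) with hg
    have hginj : Function.Injective g := by
      intro i j h
      have : σ (p.succAbove i) = σ (p.succAbove j) := by
        have := congrArg Fin.castSucc h
        simpa [hg, Fin.castSucc_castPred] using this
      exact (Fin.succAbove_right_injective (p := p)) (σ.injective this)
    obtain ⟨hinj, hsurj⟩ := Finite.injective_iff_bijective.mp hginj
    set τ := Equiv.ofBijective g ⟨hinj, hsurj⟩ with hτ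
    refine ⟨⟨p, τ⟩, ?_⟩
    simp only
    apply Equiv.ext
    intro x
    rcases eq_or_ne x p with rfl | hxp
    · rw [pIns_self, hσp]
    · obtain ⟨i, rfl⟩ := Fin.exists_succAbove_eq hxp
      rw [pIns_succAbove]
      show (g i).castSucc = _
      simp [hg, Fin.castSucc_castPred]

lemma pIns_lrmin_succAbove {m : ℕ} (p : Fin (m+1)) (τ : Equiv.Perm (Fin m)) (i : Fin m) :
    PLRMin (pIns p τ) (p.succAbove i) ↔ PLRMin τ i := by
  constructor
  · intro h j hj
    have := h (p.succAbove j) (Fin.succAbove_lt_succAbove_iff.mpr hj)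
    rwa [pIns_succAbove, pIns_succAbove, Fin.castSucc_lt_castSucc_iff] at this
  · intro h s hs
    rcases eq_or_ne s p with rfl | hne
    · rw [pIns_self, pIns_succAbove]; exact Fin.castSucc_lt_last _
    · obtain ⟨j, rfl⟩ := Fin.exists_succAbove_eq hne
      rw [pIns_succAbove, pIns_succAbove, Fin.castSucc_lt_castSucc_iff]
      exact h j (Fin.succAbove_lt_succAbove_iff.mp hs)

lemma pIns_lrmin_self {m : ℕ} (p : Fin (m+1)) (τ : Equiv.Perm (Fin m)) :
    PLRMin (pIns p τ) p ↔ p = 0 := by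
  constructor
  · intro h
    by_contra hp
    have h0 : (0 : Fin (m+1)) < p := Fin.pos_of_ne_zero hp
    obtain ⟨j, hj⟩ := Fin.exists_succAbove_eq (Ne.symm hp)
    have := h 0 h0
    rw [pIns_self, ← hj, pIns_succAbove] at this
    exact absurd this (not_lt.mpr (le_of_lt (Fin.castSucc_lt_last _)))
  · rintro rfl s hs
    exact absurd hs (Fin.not_lt_zero s)
lemma pCnt_pIns {m : ℕ} (p : Fin (m+1)) (τ : Equiv.Perm (Fin m)) :
    pCnt (pIns p τ) = pCnt τ + (if p = 0 then 1 else 0) := by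
  classical
  have hA : pCnt (pIns p τ) = (univ.filter (fun t => PLRMin (pIns p τ) t)).card := by
    rw [pCnt, Nat.card_eq_fintype_card, Fintype.card_subtype]
  have hB : pCnt τ = (univ.filter (fun i => PLRMin τ i)).card := by
    rw [pCnt, Nat.card_eq_fintype_card, Fintype.card_subtype]
  set B := (univ.filter (fun i => PLRMin τ i)).image p.succAbove with hBdef
  have hBcard : B.card = pCnt τ := by
    rw [hB, hBdef, Finset.card_image_of_injective _ (Fin.succAbove_right_injective)]
  have hpB : p ∉ B := by
    simp only [hBdef, mem_image]
    rintro ⟨i, _, hi⟩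
    exact Fin.succAbove_ne p i hi
  have hfilter : (univ.filter (fun t => PLRMin (pIns p τ) t)) =
      if p = 0 then insert p B else B := by
    ext t
    rcases eq_or_ne t p with rfl | htp
    · simp only [mem_filter, mem_univ, true_and, pIns_lrmin_self]
      split
      · next h => simp [h, mem_insert]
      · next h =>
          simp only [hBdef, mem_image, mem_filter]
          constructor
          · intro hc; exact absurd hc h
          · rintro ⟨i, ⟨_, _⟩, hi⟩; exact absurd hi (Fin.succAbove_ne t i)
    · obtain ⟨i, rfl⟩ := Fin.exists_succAbove_eq htp
      have hmem : p.succAbove i ∈ B ↔ PLRMin τ i := by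
        simp only [hBdef, mem_image, mem_filter, mem_univ, true_and]
        constructor
        · rintro ⟨j, hj, hji⟩
          rwa [← Fin.succAbove_right_injective hji]
        · intro h; exact ⟨i, h, rfl⟩
      simp only [mem_filter, mem_univ, true_and, pIns_lrmin_succAbove]
      split
      · rw [mem_insert]
        simp [htp, hmem]
      · rw [hmem]
  rw [hA, hfilter]
  split
  · rw [Finset.card_insert_of_notMem hpB, hBcard]
  · rw [hBcard, Nat.add_zero]
lemma pGamma_rec (m f : ℕ) :
    pGamma (m+1) (f+1) = m * pGamma m (f+1) + pGamma m f := by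
  classical
  have e1 : {σ : Equiv.Perm (Fin (m+1)) // pCnt σ = f+1} ≃
      {pτ : Fin (m+1) × Equiv.Perm (Fin m) // pCnt (pIns pτ.1 pτ.2) = f+1} :=
    (Equiv.subtypeEquiv (Equiv.ofBijective _ (pIns_bijective m)) (fun pτ => Iff.rfl)).symm
  have e2 : {pτ : Fin (m+1) × Equiv.Perm (Fin m) // pCnt (pIns pτ.1 pτ.2) = f+1} ≃
      Σ p : Fin (m+1), {τ : Equiv.Perm (Fin m) // pCnt (pIns p τ) = f+1} :=
    Equiv.subtypeProdEquivSigmaSubtype (fun p τ => pCnt (pIns p τ) = f+1)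
  rw [pGamma, Nat.card_eq_fintype_card, Fintype.card_congr (e1.trans e2), Fintype.card_sigma]
  have h0 : Fintype.card {τ : Equiv.Perm (Fin m) // pCnt (pIns 0 τ) = f+1} = pGamma m f := by
    rw [pGamma, Nat.card_eq_fintype_card]
    apply Fintype.card_congr
    apply Equiv.subtypeEquiv (Equiv.refl _)
    intro τ
    rw [pCnt_pIns, if_pos rfl]
    simp
  have hp : ∀ p : Fin (m+1), p ≠ 0 →
      Fintype.card {τ : Equiv.Perm (Fin m) // pCnt (pIns p τ) = f+1} = pGamma m (f+1) := by
    intro p hne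
    rw [pGamma, Nat.card_eq_fintype_card]
    apply Fintype.card_congr
    apply Equiv.subtypeEquiv (Equiv.refl _)
    intro τ
    rw [pCnt_pIns, if_neg hne]
    simp
  rw [← Finset.add_sum_erase univ _ (mem_univ (0 : Fin (m+1))), h0]
  rw [Finset.sum_congr rfl (fun p hmem => hp p (Finset.ne_of_mem_erase hmem))]
  rw [Finset.sum_const, Finset.card_erase_of_mem (mem_univ _), card_univ, Fintype.card_fin,
    smul_eq_mul, Nat.add_sub_cancel]
  omega
/-! ## Signed permutations as pairs -/

/-- The order `≺` on signed letters: `x ≺ y` iff `|x| < |y|`, or `|x| = |y|` with `x`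
barred (negative) and `y` unbarred. -/
def SPrec (x y : ℤ) : Prop := x.natAbs < y.natAbs ∨ (x.natAbs = y.natAbs ∧ x < y)

/-- `w : Fin n → ℤ` is a signed permutation of `n`: each entry has absolute value in
`{1,…,n}` and the absolute values are pairwise distinct (hence a permutation of `1,…,n`);
in particular every entry is nonzero. -/
def IsSignedPerm {n : ℕ} (w : Fin n → ℤ) : Prop :=
  (∀ t, 1 ≤ (w t).natAbs ∧ (w t).natAbs ≤ n) ∧
    Function.Injective fun t => (w t).natAbs

/-- Position `t` is a left-to-right minimum of `w`: `w t ≺ w s` for all `s < t`. -/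
def IsLRMin {n : ℕ} (w : Fin n → ℤ) (t : Fin n) : Prop :=
  ∀ s, s < t → SPrec (w t) (w s)

/-- Position `t` lies in the Lyndon factor beginning at position `m`: `m ≤ t` and no
left-to-right minimum occurs strictly between `m` (exclusive) and `t` (inclusive). -/
def InFactor {n : ℕ} (w : Fin n → ℤ) (m t : Fin n) : Prop :=
  m ≤ t ∧ ∀ s, m < s → s ≤ t → ¬ IsLRMin w s

/-- The number of barred (negative) entries in the Lyndon factor of `w` beginning at `m`. -/
noncomputable def barredCount {n : ℕ} (w : Fin n → ℤ) (m : Fin n) : ℕ :=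
  Nat.card { t : Fin n // InFactor w m t ∧ w t < 0 }

/-- The number of Lyndon factors of `w` with an odd number of barred entries. -/
noncomputable def numOddFactors {n : ℕ} (w : Fin n → ℤ) : ℕ :=
  Nat.card { m : Fin n // IsLRMin w m ∧ Odd (barredCount w m) }

/-- The number of Lyndon factors of `w` with an even number of barred entries. -/
noncomputable def numEvenFactors {n : ℕ} (w : Fin n → ℤ) : ℕ :=
  Nat.card { m : Fin n // IsLRMin w m ∧ Even (barredCount w m) }

/-- `C(n, k, k̄)`: the number of signed permutations of `n` whose Lyndon factorization has
exactly `k` factors with an odd number of barred entries and exactly `k̄` factors with an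
even number of barred entries. -/
noncomputable def bigC (n k kb : ℕ) : ℕ :=
  Nat.card { w : Fin n → ℤ // IsSignedPerm w ∧ numOddFactors w = k ∧ numEvenFactors w = kb }

/-- build a signed permutation from a permutation and a sign vector. -/
def mkW {n : ℕ} (σ : Equiv.Perm (Fin n)) (ε : Fin n → ZMod 2) : Fin n → ℤ :=
  fun t => (if ε t = 1 then (-1 : ℤ) else 1) * ((σ t : ℕ) + 1)

lemma mkW_natAbs {n : ℕ} (σ : Equiv.Perm (Fin n)) (ε : Fin n → ZMod 2) (t : Fin n) :
    (mkW σ ε t).natAbs = (σ t : ℕ) + 1 := by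
  unfold mkW
  split <;> · simp; omega

lemma mkW_neg_iff {n : ℕ} (σ : Equiv.Perm (Fin n)) (ε : Fin n → ZMod 2) (t : Fin n) :
    mkW σ ε t < 0 ↔ ε t = 1 := by
  unfold mkW
  split
  · next h => simp only [h, iff_true]; omega
  · next h => simp only [h, iff_false]; omega

lemma mkW_isSignedPerm {n : ℕ} (σ : Equiv.Perm (Fin n)) (ε : Fin n → ZMod 2) :
    IsSignedPerm (mkW σ ε) := by
  constructor
  · intro t
    rw [mkW_natAbs]
    have := (σ t).isLt
    omega
  · intro a b h
    simp only [mkW_natAbs] at h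
    have : σ a = σ b := Fin.ext (by omega)
    exact σ.injective this
noncomputable def spDecomp {n : ℕ} (w : Fin n → ℤ) (hw : IsSignedPerm w) : Equiv.Perm (Fin n) :=
  Equiv.ofBijective (fun t => (⟨(w t).natAbs - 1, by have := (hw.1 t).2; have := (hw.1 t).1; omega⟩ : Fin n))
    (Finite.injective_iff_bijective.mp (by
      intro a b h
      apply hw.2
      show (w a).natAbs = (w b).natAbs
      have h1 := (hw.1 a).1
      have h2 := (hw.1 b).1
      have h3 : (w a).natAbs - 1 = (w b).natAbs - 1 := congrArg Fin.val h
      omega))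

lemma spDecomp_apply {n : ℕ} (w : Fin n → ℤ) (hw : IsSignedPerm w) (t : Fin n) :
    (spDecomp w hw t : ℕ) = (w t).natAbs - 1 := rfl

noncomputable def spE0 (n : ℕ) :
    (Equiv.Perm (Fin n) × (Fin n → ZMod 2)) ≃ {w : Fin n → ℤ // IsSignedPerm w} where
  toFun x := ⟨mkW x.1 x.2, mkW_isSignedPerm x.1 x.2⟩
  invFun w := (spDecomp w.1 w.2, fun t => if w.1 t < 0 then 1 else 0)
  left_inv := by
    rintro ⟨σ, ε⟩
    have hall : ∀ x : ZMod 2, x = 0 ∨ x = 1 := by decide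
    refine Prod.ext ?_ ?_
    · apply Equiv.ext
      intro t
      apply Fin.ext
      rw [spDecomp_apply]
      simp only [mkW_natAbs]
      omega
    · funext t
      simp only [mkW_neg_iff]
      rcases hall (ε t) with h | h <;> rw [h] <;> simp [h]
  right_inv := by
    rintro ⟨w, hw⟩
    apply Subtype.ext
    funext t
    have h1 := (hw.1 t).1
    have habs : ((spDecomp w hw t : ℕ) + 1 : ℤ) = (w t).natAbs := by
      have h2 := spDecomp_apply w hw t
      omega
  
    show (if (if w t < 0 then (1 : ZMod 2) else 0) = 1 then (-1 : ℤ) else 1) * ((spDecomp w hw t : ℕ) + 1) = w t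
    rcases lt_or_ge (w t) 0 with hlt | hle
    · rw [if_pos hlt, if_pos rfl]
      omega
    · rw [if_neg (not_lt.mpr hle), if_neg (by decide)]
      omega
/-! ## statistic transfer -/

def PInFactor {n : ℕ} (σ : Equiv.Perm (Fin n)) (m t : Fin n) : Prop :=
  m ≤ t ∧ ∀ s, m < s → s ≤ t → ¬ PLRMin σ s

noncomputable def pBarred {n : ℕ} (σ : Equiv.Perm (Fin n)) (ε : Fin n → ZMod 2) (m : Fin n) : ℕ :=
  Nat.card { t : Fin n // PInFactor σ m t ∧ ε t = 1 }

noncomputable def oddF {n : ℕ} (σ : Equiv.Perm (Fin n)) (ε : Fin n → ZMod 2) : ℕ :=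
  Nat.card { m : Fin n // PLRMin σ m ∧ Odd (pBarred σ ε m) }

noncomputable def evenF {n : ℕ} (σ : Equiv.Perm (Fin n)) (ε : Fin n → ZMod 2) : ℕ :=
  Nat.card { m : Fin n // PLRMin σ m ∧ Even (pBarred σ ε m) }

lemma isLRMin_mkW {n : ℕ} (σ : Equiv.Perm (Fin n)) (ε : Fin n → ZMod 2) (t : Fin n) :
    IsLRMin (mkW σ ε) t ↔ PLRMin σ t := by
  unfold IsLRMin PLRMin SPrec
  apply forall_congr'
  intro s
  apply imp_congr_right
  intro hs
  rw [mkW_natAbs, mkW_natAbs]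
  constructor
  · rintro (h | ⟨h, _⟩)
    · exact Fin.lt_def.mpr (by omega)
    · exact absurd (Fin.ext (by omega : (σ t : ℕ) = σ s))
        (fun hc => (ne_of_lt hs) (σ.injective hc.symm))
  · intro h
    exact Or.inl (by have := Fin.lt_def.mp h; omega)

lemma inFactor_mkW {n : ℕ} (σ : Equiv.Perm (Fin n)) (ε : Fin n → ZMod 2) (m t : Fin n) :
    InFactor (mkW σ ε) m t ↔ PInFactor σ m t := by
  unfold InFactor PInFactor
  simp only [isLRMin_mkW]

lemma barredCount_mkW {n : ℕ} (σ : Equiv.Perm (Fin n)) (ε : Fin n → ZMod 2) (m : Fin n) :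
    barredCount (mkW σ ε) m = pBarred σ ε m := by
  unfold barredCount pBarred
  apply Nat.card_congr
  apply Equiv.subtypeEquiv (Equiv.refl _)
  intro t
  rw [inFactor_mkW, mkW_neg_iff]
  rfl

lemma numOdd_mkW {n : ℕ} (σ : Equiv.Perm (Fin n)) (ε : Fin n → ZMod 2) :
    numOddFactors (mkW σ ε) = oddF σ ε := by
  unfold numOddFactors oddF
  apply Nat.card_congr
  apply Equiv.subtypeEquiv (Equiv.refl _)
  intro m
  rw [isLRMin_mkW, barredCount_mkW]
  rfl

lemma numEven_mkW {n : ℕ} (σ : Equiv.Perm (Fin n)) (ε : Fin n → ZMod 2) :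
    numEvenFactors (mkW σ ε) = evenF σ ε := by
  unfold numEvenFactors evenF
  apply Nat.card_congr
  apply Equiv.subtypeEquiv (Equiv.refl _)
  intro m
  rw [isLRMin_mkW, barredCount_mkW]
  rfl

lemma bigC_eq_pairs (n k kb : ℕ) :
    bigC n k kb = Nat.card {x : Equiv.Perm (Fin n) × (Fin n → ZMod 2) //
      oddF x.1 x.2 = k ∧ evenF x.1 x.2 = kb} := by
  unfold bigC
  apply Nat.card_congr
  symm
  calc {x : Equiv.Perm (Fin n) × (Fin n → ZMod 2) // oddF x.1 x.2 = k ∧ evenF x.1 x.2 = kb}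
      ≃ {w : {w : Fin n → ℤ // IsSignedPerm w} // numOddFactors w.1 = k ∧ numEvenFactors w.1 = kb} := by
        apply Equiv.subtypeEquiv (spE0 n)
        rintro ⟨σ, ε⟩
        show _ ↔ (numOddFactors (mkW σ ε) = k ∧ numEvenFactors (mkW σ ε) = kb)
        rw [numOdd_mkW, numEven_mkW]
    _ ≃ {w : Fin n → ℤ // IsSignedPerm w ∧ numOddFactors w = k ∧ numEvenFactors w = kb} :=
        Equiv.subtypeSubtypeEquivSubtypeInter IsSignedPerm (fun w => numOddFactors w = k ∧ numEvenFactors w = kb)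
/-! ## factor structure of a permutation -/

section FactorStruct

variable {n : ℕ} (σ : Equiv.Perm (Fin n))

lemma PLRMin_zero' (t : Fin n) : PLRMin σ ⟨0, t.pos⟩ := by
  intro s hs
  simp only [Fin.lt_def] at hs
  omega

/-- the start of the factor containing `t`. -/
noncomputable def facOf (t : Fin n) : Fin n :=
  (Finset.filter (fun s => s ≤ t ∧ PLRMin σ s) Finset.univ).max'
    ⟨⟨0, t.pos⟩, by
      simp only [Finset.mem_filter, Finset.mem_univ, true_and]
      exact ⟨by simp only [Fin.le_def]; omega, PLRMin_zero' σ t⟩⟩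

lemma facOf_mem (t : Fin n) : facOf σ t ≤ t ∧ PLRMin σ (facOf σ t) := by
  have := Finset.max'_mem (Finset.filter (fun s => s ≤ t ∧ PLRMin σ s) Finset.univ)
    (by exact ⟨⟨0, t.pos⟩, by
      simp only [Finset.mem_filter, Finset.mem_univ, true_and]
      exact ⟨by simp only [Fin.le_def]; omega, PLRMin_zero' σ t⟩⟩)
  simp only [Finset.mem_filter, Finset.mem_univ, true_and] at this
  exact this

lemma facOf_lrmin (t : Fin n) : PLRMin σ (facOf σ t) := (facOf_mem σ t).2

lemma facOf_inFactor (t : Fin n) : PInFactor σ (facOf σ t) t := by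
  refine ⟨(facOf_mem σ t).1, ?_⟩
  intro s hms hst hlr
  have hs : s ∈ Finset.filter (fun s => s ≤ t ∧ PLRMin σ s) Finset.univ := by
    simp only [Finset.mem_filter, Finset.mem_univ, true_and]
    exact ⟨hst, hlr⟩
  have := Finset.le_max' _ s hs
  exact absurd hms (not_lt.mpr this)

lemma facOf_unique {m t : Fin n} (hm : PLRMin σ m) (hf : PInFactor σ m t) :
    facOf σ t = m := by
  rcases lt_trichotomy (facOf σ t) m with h | h | h
  · exact absurd hm ((facOf_inFactor σ t).2 m h hf.1)
  · exact h
  · exact absurd (facOf_lrmin σ t) (hf.2 _ h (facOf_mem σ t).1)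

lemma PInFactor_self {m : Fin n} : PInFactor σ m m :=
  ⟨le_refl m, fun s h1 h2 => absurd (lt_of_lt_of_le h1 h2) (lt_irrefl m)⟩

lemma facOf_self {m : Fin n} (hm : PLRMin σ m) : facOf σ m = m :=
  facOf_unique σ hm (PInFactor_self σ)

/-- membership in factor `m` is equivalent to `facOf = m`, for `m` an LR minimum. -/
lemma inFactor_iff_facOf {m t : Fin n} (hm : PLRMin σ m) :
    PInFactor σ m t ↔ facOf σ t = m := by
  constructor
  · exact facOf_unique σ hm
  · rintro rfl; exact facOf_inFactor σ t

/-- the only LR minimum inside factor `m` is `m` itself. -/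
lemma lrmin_in_factor_eq {m t : Fin n} (hf : PInFactor σ m t) (ht : PLRMin σ t) : t = m := by
  rcases eq_or_lt_of_le hf.1 with h | h
  · exact h.symm
  · exact absurd ht (hf.2 t h (le_refl t))
/-! ## the parity homomorphism -/

lemma zmod2_cases (x : ZMod 2) : x = 0 ∨ x = 1 := by revert x; decide

lemma natCard_subtype {α : Type*} [Fintype α] (P : α → Prop) [DecidablePred P] :
    Nat.card {x // P x} = (Finset.filter P Finset.univ).card := by
  rw [Nat.card_eq_fintype_card, Fintype.card_subtype]

noncomputable def phi {n : ℕ} (σ : Equiv.Perm (Fin n)) :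
    (Fin n → ZMod 2) →+ ({m : Fin n // PLRMin σ m} → ZMod 2) :=
  AddMonoidHom.mk'
    (fun ε m => ∑ t ∈ Finset.filter (fun t => PInFactor σ m.1 t) Finset.univ, ε t)
    (by
      intro a b
      funext m
      exact Finset.sum_add_distrib)

lemma phi_eq_one_iff {n : ℕ} (σ : Equiv.Perm (Fin n)) (ε : Fin n → ZMod 2)
    (m : {m : Fin n // PLRMin σ m}) :
    phi σ ε m = 1 ↔ Odd (pBarred σ ε m.1) := by
  have h1 : phi σ ε m = ((Finset.filter (fun t => PInFactor σ m.1 t ∧ ε t = 1) Finset.univ).card : ZMod 2) := by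
    show (∑ t ∈ Finset.filter (fun t => PInFactor σ m.1 t) Finset.univ, ε t) = _
    rw [show (∑ t ∈ Finset.filter (fun t => PInFactor σ m.1 t) Finset.univ, ε t)
        = ∑ t ∈ Finset.filter (fun t => PInFactor σ m.1 t) Finset.univ,
            (if ε t = 1 then (1 : ZMod 2) else 0) from
      Finset.sum_congr rfl (fun t _ => by rcases zmod2_cases (ε t) with h | h <;> simp [h])]
    rw [Finset.sum_boole, Finset.filter_filter]
  rw [h1, ZMod.natCast_eq_one_iff_odd]
  unfold pBarred
  rw [natCard_subtype]

lemma phi_surjective {n : ℕ} (σ : Equiv.Perm (Fin n)) : Function.Surjective (phi σ) := by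
  intro p
  classical
  refine ⟨fun t => if h : PLRMin σ t then p ⟨t, h⟩ else 0, ?_⟩
  funext m
  show (∑ t ∈ Finset.filter (fun t => PInFactor σ m.1 t) Finset.univ,
      (if h : PLRMin σ t then p ⟨t, h⟩ else 0)) = p m
  rw [Finset.sum_eq_single m.1]
  · rw [dif_pos m.2]
  · intro t ht htne
    simp only [Finset.mem_filter, Finset.mem_univ, true_and] at ht
    rw [dif_neg]
    intro hlr
    exact htne (lrmin_in_factor_eq σ ht hlr)
  · intro hm
    exfalso
    apply hm
    simp only [Finset.mem_filter, Finset.mem_univ, true_and]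
    exact PInFactor_self σ

lemma pCnt_eq_card {n : ℕ} (σ : Equiv.Perm (Fin n)) :
    pCnt σ = Fintype.card {m : Fin n // PLRMin σ m} := by
  rw [pCnt, Nat.card_eq_fintype_card]

lemma phi_fiber_card {n : ℕ} (σ : Equiv.Perm (Fin n)) (p : {m : Fin n // PLRMin σ m} → ZMod 2) :
    Nat.card {ε : Fin n → ZMod 2 // phi σ ε = p} = 2 ^ (n - pCnt σ) := by
  classical
  obtain ⟨ε₀, hε₀⟩ := phi_surjective σ p
  have e1 : {ε : Fin n → ZMod 2 // phi σ ε = p} ≃ {ε : Fin n → ZMod 2 // phi σ ε = 0} :=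
    { toFun := fun ε => ⟨ε.1 - ε₀, by rw [map_sub, ε.2, hε₀, sub_self]⟩
      invFun := fun δ => ⟨δ.1 + ε₀, by rw [map_add, δ.2, hε₀, zero_add]⟩
      left_inv := fun ε => Subtype.ext (by simp)
      right_inv := fun δ => Subtype.ext (by simp) }
  have hker_eq : {ε : Fin n → ZMod 2 // phi σ ε = 0} ≃ (phi σ).ker :=
    Equiv.subtypeEquiv (Equiv.refl _) (fun ε => (AddMonoidHom.mem_ker).symm)
  have hquot : Nat.card ((Fin n → ZMod 2) ⧸ (phi σ).ker) = 2 ^ pCnt σ := by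
    rw [Nat.card_congr (QuotientAddGroup.quotientKerEquivOfSurjective (phi σ)
      (phi_surjective σ)).toEquiv]
    rw [Nat.card_eq_fintype_card, Fintype.card_fun, ← pCnt_eq_card]
    norm_num [ZMod.card]
  have htot : Nat.card (Fin n → ZMod 2) = 2 ^ n := by
    rw [Nat.card_eq_fintype_card, Fintype.card_fun]
    simp [ZMod.card]
  have hmul := AddSubgroup.card_eq_card_quotient_mul_card_addSubgroup (phi σ).ker
  rw [htot, hquot] at hmul
  have hle := pCnt_le σ
  have h2 : (2:ℕ)^n = 2^(pCnt σ) * 2^(n - pCnt σ) := by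
    rw [← pow_add]
    congr 1
    omega
  have hk : Nat.card (phi σ).ker = 2 ^ (n - pCnt σ) :=
    Nat.eq_of_mul_eq_mul_left (pow_pos (by norm_num) _) (hmul.symm.trans h2)
  rw [Nat.card_congr (e1.trans hker_eq), hk]
/-! ## counting sign vectors for a fixed permutation -/

lemma oddF_eq {n : ℕ} (σ : Equiv.Perm (Fin n)) (ε : Fin n → ZMod 2) :
    oddF σ ε = (Finset.filter (fun m : {m : Fin n // PLRMin σ m} => phi σ ε m = 1)
      Finset.univ).card := by
  unfold oddF
  rw [← natCard_subtype]
  apply Nat.card_congr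
  refine Equiv.trans ?_ (Equiv.subtypeEquiv (Equiv.refl _)
    (fun m => (phi_eq_one_iff σ ε m).symm))
  exact (Equiv.subtypeSubtypeEquivSubtypeInter (PLRMin σ)
    (fun m => Odd (pBarred σ ε m))).symm

lemma evenF_eq {n : ℕ} (σ : Equiv.Perm (Fin n)) (ε : Fin n → ZMod 2) :
    evenF σ ε = (Finset.filter (fun m : {m : Fin n // PLRMin σ m} => phi σ ε m = 0)
      Finset.univ).card := by
  unfold evenF
  rw [← natCard_subtype]
  apply Nat.card_congr
  have hiff : ∀ m : {m : Fin n // PLRMin σ m}, Even (pBarred σ ε m.1) ↔ phi σ ε m = 0 := by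
    intro m
    rw [← Nat.not_odd_iff_even, ← phi_eq_one_iff σ ε m]
    rcases zmod2_cases (phi σ ε m) with h | h <;> simp [h]
  exact ((Equiv.subtypeSubtypeEquivSubtypeInter (PLRMin σ)
      (fun m => Even (pBarred σ ε m))).symm).trans
    (Equiv.subtypeEquiv (Equiv.refl _) (fun m => hiff m))

lemma indicator_filter {α : Type*} [Fintype α] [DecidableEq α] (S : Finset α) :
    Finset.filter (fun a => (if a ∈ S then (1 : ZMod 2) else 0) = 1) Finset.univ = S := by
  ext a
  simp only [Finset.mem_filter, Finset.mem_univ, true_and]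
  split
  · next h => simp [h]
  · next h => simp [h]

lemma card_parityVec {α : Type*} [Fintype α] [DecidableEq α] (k : ℕ) :
    Nat.card {p : α → ZMod 2 // (Finset.filter (fun a => p a = 1) Finset.univ).card = k}
      = (Fintype.card α).choose k := by
  classical
  rw [← Fintype.card_finset_len, Nat.card_eq_fintype_card]
  apply Fintype.card_congr
  refine
    { toFun := fun p => ⟨Finset.filter (fun a => p.1 a = 1) Finset.univ, p.2⟩
      invFun := fun S => ⟨fun a => if a ∈ S.1 then 1 else 0, by rw [indicator_filter]; exact S.2⟩
      left_inv := ?_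
      right_inv := ?_ }
  · rintro ⟨p, hp⟩
    apply Subtype.ext
    funext a
    simp only [Finset.mem_filter, Finset.mem_univ, true_and]
    rcases zmod2_cases (p a) with h | h <;> simp [h]
  · rintro ⟨S, hS⟩
    apply Subtype.ext
    exact indicator_filter S

lemma parity_partition {n : ℕ} (σ : Equiv.Perm (Fin n))
    (p : {m : Fin n // PLRMin σ m} → ZMod 2) :
    (Finset.filter (fun m => p m = 1) Finset.univ).card
      + (Finset.filter (fun m => p m = 0) Finset.univ).card = pCnt σ := by
  classical
  have h0 : Finset.filter (fun m => p m = 0) Finset.univ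
      = Finset.filter (fun m => ¬ p m = 1) Finset.univ := by
    apply Finset.filter_congr
    intro m _
    rcases zmod2_cases (p m) with h | h <;> simp [h]
  rw [h0, Finset.card_filter_add_card_filter_not, Finset.card_univ, ← pCnt_eq_card]

lemma count_eps {n : ℕ} (σ : Equiv.Perm (Fin n)) (k kb : ℕ) :
    Nat.card {ε : Fin n → ZMod 2 // oddF σ ε = k ∧ evenF σ ε = kb}
      = if k + kb = pCnt σ then (pCnt σ).choose k * 2 ^ (n - pCnt σ) else 0 := by
  classical
  set Q : ({m : Fin n // PLRMin σ m} → ZMod 2) → Prop := fun p =>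
    (Finset.filter (fun m => p m = 1) Finset.univ).card = k ∧
    (Finset.filter (fun m => p m = 0) Finset.univ).card = kb with hQ
  rw [natCard_subtype]
  have hcond : ∀ ε : Fin n → ZMod 2, (oddF σ ε = k ∧ evenF σ ε = kb) ↔ Q (phi σ ε) := by
    intro ε
    rw [oddF_eq, evenF_eq, hQ]
  simp only [hcond]
  rw [Finset.card_eq_sum_card_fiberwise (f := fun ε => phi σ ε)
    (t := Finset.filter Q Finset.univ)
    (fun ε hε => by
      simp only [Finset.coe_filter, Finset.mem_coe, Finset.mem_filter, Finset.mem_univ, true_and, Set.mem_setOf_eq] at hε ⊢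
      exact hε)]
  have hfib : ∀ p ∈ Finset.filter Q Finset.univ,
      (Finset.filter (fun ε => phi σ ε = p)
        (Finset.filter (fun ε => Q (phi σ ε)) Finset.univ)).card = 2 ^ (n - pCnt σ) := by
    intro p hp
    simp only [Finset.mem_filter, Finset.mem_univ, true_and] at hp
    have : Finset.filter (fun ε => phi σ ε = p)
        (Finset.filter (fun ε => Q (phi σ ε)) Finset.univ)
        = Finset.filter (fun ε => phi σ ε = p) Finset.univ := by
      rw [Finset.filter_filter]
      apply Finset.filter_congr
      intro ε _
      constructor
      · rintro ⟨_, h⟩; exact h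
      · intro h; exact ⟨by rw [h]; exact hp, h⟩
    rw [this, ← natCard_subtype, phi_fiber_card]
  rw [Finset.sum_congr rfl hfib, Finset.sum_const, smul_eq_mul]
  by_cases hkk : k + kb = pCnt σ
  · rw [if_pos hkk]
    congr 1
    have hQ1 : Finset.filter Q Finset.univ
        = Finset.filter (fun p : {m : Fin n // PLRMin σ m} → ZMod 2 =>
            (Finset.filter (fun m => p m = 1) Finset.univ).card = k) Finset.univ := by
      apply Finset.filter_congr
      intro p _
      have hpart := parity_partition σ p
      constructor
      · rintro ⟨h1, _⟩; exact h1
      · intro h1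
        exact ⟨h1, by omega⟩
    rw [hQ1, ← natCard_subtype, card_parityVec, ← pCnt_eq_card]
  · rw [if_neg hkk]
    have : Finset.filter Q Finset.univ = ∅ := by
      apply Finset.filter_false_of_mem
      intro p _
      rintro ⟨h1, h2⟩
      exact hkk (by rw [← h1, ← h2]; exact parity_partition σ p)
    rw [this, Finset.card_empty, zero_mul]
/-! ## closed formula for bigC -/

lemma bigC_formula (n k kb : ℕ) :
    bigC n k kb = (k+kb).choose k * 2 ^ (n-(k+kb)) * pGamma n (k+kb) := by
  classical
  rw [bigC_eq_pairs]
  rw [Nat.card_congr (Equiv.subtypeProdEquivSigmaSubtype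
    (fun (σ : Equiv.Perm (Fin n)) (ε : Fin n → ZMod 2) => oddF σ ε = k ∧ evenF σ ε = kb))]
  rw [Nat.card_eq_fintype_card, Fintype.card_sigma]
  have hterm : ∀ σ : Equiv.Perm (Fin n),
      Fintype.card {ε : Fin n → ZMod 2 // oddF σ ε = k ∧ evenF σ ε = kb}
        = if pCnt σ = k + kb then (k+kb).choose k * 2 ^ (n-(k+kb)) else 0 := by
    intro σ
    rw [← Nat.card_eq_fintype_card, count_eps]
    by_cases h : pCnt σ = k + kb
    · rw [if_pos (by omega), if_pos h, h]
    · rw [if_neg (by omega), if_neg h]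
  rw [Finset.sum_congr rfl (fun σ _ => hterm σ)]
  rw [← Finset.sum_filter, Finset.sum_const, smul_eq_mul]
  rw [pGamma, natCard_subtype]
  ring
/-! ## the sums U and V -/

noncomputable def UU (n k : ℕ) : ℤ :=
  ∑ f ∈ Finset.range (n+1), (f.choose k : ℤ) * 2 ^ (n-f) * pGamma n f

noncomputable def VV (n k : ℕ) : ℤ :=
  ∑ f ∈ Finset.range (n+1), (-1 : ℤ) ^ (f+k) * (f.choose k : ℤ) * 2 ^ (n-f) * pGamma n f

lemma reindex_sum (N R k : ℕ) (h : ℕ → ℤ) (hNR : N < R)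
    (hbig : ∀ f, N < f → h f = 0) (hsmall : ∀ f, f < k → h f = 0) :
    (∑ f ∈ Finset.range (N+1), h f) = ∑ kb ∈ Finset.range R, h (k + kb) := by
  have h1 : (∑ f ∈ Finset.range (N+1), h f) = ∑ f ∈ Finset.range (k+R), h f := by
    apply Finset.sum_subset
    · apply Finset.range_subset_range.mpr
      omega
    · intro f _ hf
      simp only [Finset.mem_range] at hf
      exact hbig f (by omega)
  rw [h1, Finset.range_eq_Ico,
    ← Finset.sum_Ico_consecutive _ (Nat.zero_le k) (by omega : k ≤ k + R)]
  have h0 : (∑ f ∈ Finset.Ico 0 k, h f) = 0 := by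
    apply Finset.sum_eq_zero
    intro f hf
    simp only [Finset.mem_Ico] at hf
    exact hsmall f hf.2
  rw [h0, zero_add, Finset.sum_Ico_eq_sum_range]
  simp only [Nat.add_sub_cancel_left]

lemma bridge_total (N R k : ℕ) (hNR : N < R) :
    (∑ kb ∈ Finset.range R, (bigC N k kb : ℤ)) = UU N k := by
  rw [UU]
  rw [reindex_sum N R k _ hNR
    (fun f hf => by
      show (f.choose k : ℤ) * 2 ^ (N-f) * pGamma N f = 0
      simp only [pGamma_eq_zero_of_lt hf]
      push_cast
      ring)
    (fun f hf => by
      show (f.choose k : ℤ) * 2 ^ (N-f) * pGamma N f = 0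
      simp only [Nat.choose_eq_zero_of_lt hf]
      push_cast
      ring)]
  apply Finset.sum_congr rfl
  intro kb _
  rw [bigC_formula]
  push_cast
  ring

lemma parity_add_iff (k kb : ℕ) : Odd ((k + kb) + k) ↔ Odd kb := by
  rw [Nat.odd_iff, Nat.odd_iff]
  omega

lemma bridge_odd (N R k : ℕ) (hNR : N < R) :
    2 * (∑ kb ∈ Finset.range R, (if Odd kb then (bigC N k kb : ℤ) else 0))
      = UU N k - VV N k := by
  rw [UU, VV, ← Finset.sum_sub_distrib, Finset.mul_sum]
  rw [reindex_sum N R k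
    (fun f => (f.choose k : ℤ) * 2 ^ (N-f) * pGamma N f
      - (-1 : ℤ) ^ (f+k) * (f.choose k : ℤ) * 2 ^ (N-f) * pGamma N f)
    hNR
    (fun f hf => by simp only [pGamma_eq_zero_of_lt hf]; push_cast; ring)
    (fun f hf => by simp only [Nat.choose_eq_zero_of_lt hf]; push_cast; ring)]
  apply Finset.sum_congr rfl
  intro kb _
  rw [bigC_formula]
  by_cases h : Odd kb
  · rw [if_pos h]
    have hsgn : (-1 : ℤ) ^ ((k + kb) + k) = -1 :=
      Odd.neg_one_pow ((parity_add_iff k kb).mpr h)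
    rw [hsgn]
    push_cast
    ring
  · rw [if_neg h]
    have hsgn : (-1 : ℤ) ^ ((k + kb) + k) = 1 :=
      Even.neg_one_pow (by
        rcases Nat.even_or_odd ((k+kb)+k) with he | ho
        · exact he
        · exact absurd ((parity_add_iff k kb).mp ho) h)
    rw [hsgn]
    push_cast
    ring

lemma bridge_even (N R k : ℕ) (hNR : N < R) :
    2 * (∑ kb ∈ Finset.range R, (if Even kb then (bigC N k kb : ℤ) else 0))
      = UU N k + VV N k := by
  rw [UU, VV, ← Finset.sum_add_distrib, Finset.mul_sum]
  rw [reindex_sum N R k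
    (fun f => (f.choose k : ℤ) * 2 ^ (N-f) * pGamma N f
      + (-1 : ℤ) ^ (f+k) * (f.choose k : ℤ) * 2 ^ (N-f) * pGamma N f)
    hNR
    (fun f hf => by simp only [pGamma_eq_zero_of_lt hf]; push_cast; ring)
    (fun f hf => by simp only [Nat.choose_eq_zero_of_lt hf]; push_cast; ring)]
  apply Finset.sum_congr rfl
  intro kb _
  rw [bigC_formula]
  by_cases h : Even kb
  · rw [if_pos h]
    have hsgn : (-1 : ℤ) ^ ((k + kb) + k) = 1 :=
      Even.neg_one_pow (by
        rcases Nat.even_or_odd ((k+kb)+k) with he | ho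
        · exact he
        · exact absurd ((parity_add_iff k kb).mp ho) (Nat.not_odd_iff_even.mpr h))
    rw [hsgn]
    push_cast
    ring
  · rw [if_neg h]
    have hsgn : (-1 : ℤ) ^ ((k + kb) + k) = -1 :=
      Odd.neg_one_pow ((parity_add_iff k kb).mpr (Nat.not_even_iff_odd.mp h))
    rw [hsgn]
    push_cast
    ring
/-! ## recurrences for UU and VV -/

lemma S_rec (m : ℕ) (a : ℕ → ℤ) :
    (∑ f ∈ Finset.range (m+2), a f * 2^(m+1-f) * pGamma (m+1) f)
      = 2*(m:ℤ) * (∑ g ∈ Finset.range (m+1), a g * 2^(m-g) * pGamma m g)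
        + ∑ f ∈ Finset.range (m+1), a (f+1) * 2^(m-f) * pGamma m f := by
  rw [Finset.sum_range_succ']
  have h0 : a 0 * 2^(m+1-0) * (pGamma (m+1) 0 : ℤ) = 0 := by
    rw [pGamma_succ_zero]
    push_cast
    ring
  rw [h0, add_zero]
  have hstep : ∀ f ∈ Finset.range (m+1),
      a (f+1) * 2^(m+1-(f+1)) * (pGamma (m+1) (f+1) : ℤ)
        = (m:ℤ) * (a (f+1) * 2^(m-f) * pGamma m (f+1)) + a (f+1) * 2^(m-f) * pGamma m f := by
    intro f hf
    rw [pGamma_rec, show m+1-(f+1) = m-f from by omega]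
    push_cast
    ring
  rw [Finset.sum_congr rfl hstep, Finset.sum_add_distrib, ← Finset.mul_sum]
  have hshift : ∑ f ∈ Finset.range (m+1), a (f+1) * 2^(m-f) * (pGamma m (f+1) : ℤ)
      = 2 * (∑ g ∈ Finset.range (m+1), a g * 2^(m-g) * pGamma m g)
        - a 0 * 2^(m+1) * pGamma m 0 := by
    have h2 := Finset.sum_range_succ' (fun g => a g * 2^(m+1-g) * (pGamma m g : ℤ)) (m+1)
    have h3 : ∑ g ∈ Finset.range (m+2), a g * 2^(m+1-g) * (pGamma m g : ℤ)
        = 2 * ∑ g ∈ Finset.range (m+1), a g * 2^(m-g) * (pGamma m g : ℤ) := by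
      rw [Finset.sum_range_succ, pGamma_eq_zero_of_lt (by omega : m < m+1)]
      push_cast
      rw [mul_zero, add_zero, Finset.mul_sum]
      apply Finset.sum_congr rfl
      intro g hg
      simp only [Finset.mem_range] at hg
      rw [show m+1-g = (m-g)+1 from by omega]
      ring
    have h4 : ∀ f ∈ Finset.range (m+1),
        a (f+1) * 2^(m+1-(f+1)) * (pGamma m (f+1) : ℤ)
          = a (f+1) * 2^(m-f) * (pGamma m (f+1) : ℤ) := by
      intro f hf
      rw [show m+1-(f+1) = m-f from by omega]
    rw [h3] at h2
    simp only [Nat.sub_zero] at h2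
    rw [← Finset.sum_congr rfl h4]
    linarith [h2]
  rw [hshift]
  have hz : (m:ℤ) * (pGamma m 0 : ℤ) = 0 := by
    cases m with
    | zero => push_cast; ring
    | succ m' =>
        rw [pGamma_succ_zero]
        push_cast
        ring
  linear_combination (-(a 0) * 2^(m+1)) * hz

lemma UU_rec_succ (m k : ℕ) :
    UU (m+1) (k+1) = (2*(m:ℤ)+1) * UU m (k+1) + UU m k := by
  have h := S_rec m (fun f => (f.choose (k+1) : ℤ))
  rw [UU, UU, UU]
  rw [show (m+1)+1 = m+2 from rfl] at *
  rw [h]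
  have hp : ∀ f ∈ Finset.range (m+1),
      ((f+1).choose (k+1) : ℤ) * 2^(m-f) * pGamma m f
        = (f.choose k : ℤ) * 2^(m-f) * pGamma m f
          + (f.choose (k+1) : ℤ) * 2^(m-f) * pGamma m f := by
    intro f hf
    rw [Nat.choose_succ_succ]
    push_cast
    ring
  rw [Finset.sum_congr rfl hp, Finset.sum_add_distrib]
  ring

lemma UU_rec_zero (m : ℕ) :
    UU (m+1) 0 = (2*(m:ℤ)+1) * UU m 0 := by
  have h := S_rec m (fun f => (f.choose 0 : ℤ))
  rw [UU, UU]
  rw [h]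
  have hp : ∀ f ∈ Finset.range (m+1),
      ((f+1).choose 0 : ℤ) * 2^(m-f) * pGamma m f
        = (f.choose 0 : ℤ) * 2^(m-f) * pGamma m f := by
    intro f hf
    rw [Nat.choose_zero_right, Nat.choose_zero_right]
  rw [Finset.sum_congr rfl hp]
  ring

lemma VV_rec_succ (m k : ℕ) :
    VV (m+1) (k+1) = (2*(m:ℤ)-1) * VV m (k+1) + VV m k := by
  have h := S_rec m (fun f => (-1:ℤ)^(f+(k+1)) * (f.choose (k+1) : ℤ))
  rw [VV, VV, VV]
  have heq : ∀ f ∈ Finset.range (m+2),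
      (-1:ℤ)^(f+(k+1)) * (f.choose (k+1) : ℤ) * 2^(m+1-f) * pGamma (m+1) f
        = ((-1:ℤ)^(f+(k+1)) * (f.choose (k+1) : ℤ)) * 2^(m+1-f) * pGamma (m+1) f := by
    intro f hf
    ring
  rw [Finset.sum_congr rfl heq, h]
  have hp : ∀ f ∈ Finset.range (m+1),
      ((-1:ℤ)^((f+1)+(k+1)) * ((f+1).choose (k+1) : ℤ)) * 2^(m-f) * pGamma m f
        = (-1:ℤ)^(f+k) * (f.choose k : ℤ) * 2^(m-f) * pGamma m f
          - (-1:ℤ)^(f+(k+1)) * (f.choose (k+1) : ℤ) * 2^(m-f) * pGamma m f := by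
    intro f hf
    rw [Nat.choose_succ_succ]
    push_cast
    ring
  rw [Finset.sum_congr rfl hp, Finset.sum_sub_distrib]
  have hback : ∀ f ∈ Finset.range (m+1),
      ((-1:ℤ)^(f+(k+1)) * (f.choose (k+1) : ℤ)) * 2^(m-f) * pGamma m f
        = (-1:ℤ)^(f+(k+1)) * (f.choose (k+1) : ℤ) * 2^(m-f) * pGamma m f := by
    intro f hf
    ring
  rw [Finset.sum_congr rfl hback]
  ring

lemma VV_rec_zero (m : ℕ) :
    VV (m+1) 0 = (2*(m:ℤ)-1) * VV m 0 := by
  have h := S_rec m (fun f => (-1:ℤ)^(f+0) * (f.choose 0 : ℤ))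
  rw [VV, VV]
  have heq : ∀ f ∈ Finset.range (m+2),
      (-1:ℤ)^(f+0) * (f.choose 0 : ℤ) * 2^(m+1-f) * pGamma (m+1) f
        = ((-1:ℤ)^(f+0) * (f.choose 0 : ℤ)) * 2^(m+1-f) * pGamma (m+1) f := by
    intro f hf
    ring
  rw [Finset.sum_congr rfl heq, h]
  have hp : ∀ f ∈ Finset.range (m+1),
      ((-1:ℤ)^((f+1)+0) * ((f+1).choose 0 : ℤ)) * 2^(m-f) * pGamma m f
        = -((-1:ℤ)^(f+0) * (f.choose 0 : ℤ) * 2^(m-f) * pGamma m f) := by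
    intro f hf
    rw [Nat.choose_zero_right, Nat.choose_zero_right]
    push_cast
    ring
  rw [Finset.sum_congr rfl hp, Finset.sum_neg_distrib]
  ring
/-! ## base values and the formula for VV -/

lemma UU_zero (K : ℕ) : UU 0 K = if K = 0 then 1 else 0 := by
  rw [UU]
  rw [Finset.sum_range_one, pGamma_zero_left]
  cases K with
  | zero => norm_num
  | succ K' =>
      rw [Nat.choose_eq_zero_of_lt (by omega)]
      simp

lemma VV_zero (K : ℕ) : VV 0 K = if K = 0 then 1 else 0 := by
  rw [VV]
  rw [Finset.sum_range_one, pGamma_zero_left]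
  cases K with
  | zero => norm_num
  | succ K' =>
      rw [Nat.choose_eq_zero_of_lt (by omega)]
      simp

lemma VV_formula (m : ℕ) :
    (∀ k, VV (m+1) (k+1) = UU m k - UU m (k+1)) ∧ VV (m+1) 0 = -UU m 0 := by
  induction m with
  | zero =>
    constructor
    · intro k
      rw [VV_rec_succ, VV_zero, VV_zero, UU_zero, UU_zero]
      rw [if_neg (Nat.succ_ne_zero k)]
      cases k with
      | zero => norm_num
      | succ k' => norm_num
    · rw [VV_rec_zero, VV_zero, UU_zero]
      norm_num
  | succ m' ih =>
    constructor
    · intro k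
      cases k with
      | zero =>
        rw [VV_rec_succ, ih.1 0, ih.2, UU_rec_zero, UU_rec_succ]
        push_cast
        ring
      | succ k' =>
        rw [VV_rec_succ, ih.1 (k'+1), ih.1 k', UU_rec_succ, UU_rec_succ]
        push_cast
        ring
    · rw [VV_rec_zero, ih.2, UU_rec_zero]
      push_cast
      ring
/-! ## the main theorem -/

/-- `c(n, k)`: the signless Stirling number of the first kind, i.e. the number of
permutations of `(1,…,n)` with exactly `k` left-to-right minima. -/
noncomputable def littleC (n k : ℕ) : ℕ :=
  Nat.card { σ : Equiv.Perm (Fin n) //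
    Nat.card { t : Fin n // ∀ s, s < t → σ t < σ s } = k }

/-- for `n ≥ 1` and every `k`:
(1) `Σ_{k̄ odd} C(n,k,k̄) = n · Σ_{k̄} C(n−1,k,k̄)`, and
(2) `Σ_{k̄ even} C(n,k,k̄) = (n−1) · Σ_{k̄} C(n−1,k,k̄) + Σ_{k̄} C(n−1,k−1,k̄)`,
the last sum being `0` when `k = 0`. (All sums are finite; `C(m,j,k̄) = 0` for
`j + k̄ > m`, so summing `k̄` over `0,…,n` captures every nonzero term.) -/
theorem bigC_parity_sums (n : ℕ) (hn : 1 ≤ n) (k : ℕ) :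
    (∑ kb ∈ Finset.range (n + 1), if Odd kb then bigC n k kb else 0) =
        n * ∑ kb ∈ Finset.range (n + 1), bigC (n - 1) k kb ∧
    (∑ kb ∈ Finset.range (n + 1), if Even kb then bigC n k kb else 0) =
        (n - 1) * (∑ kb ∈ Finset.range (n + 1), bigC (n - 1) k kb) +
          (if k = 0 then 0 else ∑ kb ∈ Finset.range (n + 1), bigC (n - 1) (k - 1) kb) := by
  classical
  cases n with
  | zero => omega
  | succ m =>
    have hR : m < m + 2 := by omega
    have hA := bridge_total m (m+2) k hR
    have hO := bridge_odd (m+1) (m+2) k (by omega)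
    have hE := bridge_even (m+1) (m+2) k (by omega)
    simp only [Nat.add_sub_cancel]
    constructor
    · have key : UU (m+1) k - VV (m+1) k = 2*(((m:ℤ)+1) * UU m k) := by
        cases k with
        | zero => rw [UU_rec_zero, (VV_formula m).2]; ring
        | succ k' => rw [UU_rec_succ, (VV_formula m).1 k']; ring
      have h2 : (2:ℤ) * (∑ kb ∈ Finset.range (m+2), (if Odd kb then (bigC (m+1) k kb : ℤ) else 0))
          = 2 * (((m:ℤ)+1) * ∑ kb ∈ Finset.range (m+2), (bigC m k kb : ℤ)) := by
        rw [hO, key, hA]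
      have h3 := mul_left_cancel₀ (by norm_num : (2:ℤ) ≠ 0) h2
      have goalZ : ((∑ kb ∈ Finset.range (m+2), if Odd kb then bigC (m+1) k kb else 0 : ℕ) : ℤ)
          = (((m+1) * ∑ kb ∈ Finset.range (m+2), bigC m k kb : ℕ) : ℤ) := by
        push_cast
        convert h3 using 2
      exact_mod_cast goalZ
    · have hA' := bridge_total m (m+2) (k-1) hR
      have key : UU (m+1) k + VV (m+1) k
          = 2*((m:ℤ) * UU m k + (if k = 0 then 0 else UU m (k-1))) := by
        cases k with
        | zero => rw [UU_rec_zero, (VV_formula m).2, if_pos rfl]; ring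
        | succ k' =>
            rw [UU_rec_succ, (VV_formula m).1 k', if_neg (Nat.succ_ne_zero k')]
            simp only [Nat.add_sub_cancel]
            ring
      have h2 : (2:ℤ) * (∑ kb ∈ Finset.range (m+2), (if Even kb then (bigC (m+1) k kb : ℤ) else 0))
          = 2 * ((m:ℤ) * (∑ kb ∈ Finset.range (m+2), (bigC m k kb : ℤ))
              + (if k = 0 then 0 else ∑ kb ∈ Finset.range (m+2), (bigC m (k-1) kb : ℤ))) := by
        rw [hE, key, hA, hA']
      have h3 := mul_left_cancel₀ (by norm_num : (2:ℤ) ≠ 0) h2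
      have goalZ : ((∑ kb ∈ Finset.range (m+2), if Even kb then bigC (m+1) k kb else 0 : ℕ) : ℤ)
          = ((m * (∑ kb ∈ Finset.range (m+2), bigC m k kb)
              + (if k = 0 then 0 else ∑ kb ∈ Finset.range (m+2), bigC m (k-1) kb) : ℕ) : ℤ) := by
        push_cast
        convert h3 using 2
      exact_mod_cast goalZ
end FactorStruct
end

section
/- For every natural number n, the polynomial identity Σ_{k, k̄ ≥ 0} C(n, k, k̄) · X^k = (X+1)(X+3)⋯(X+2n−1) = ∏_{i=0}^{n−1} (X + 2i + 1) holds in ℤ[X]. (The sum is finite since C(n, k, k̄) = 0 for k + k̄ > n; for n = 0 both sides equal 1.) -/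
/-!
Every signed permutation of `n + 1` arises in exactly one way by inserting the letter `n + 1`,
barred or not, at one of the `n + 1` positions of a signed permutation of `n`. As `n + 1` is the
largest letter, it is a left-to-right minimum only when inserted in front, where it forms a new
one-letter factor, odd iff barred; elsewhere it joins the factor of its left neighbour and leaves
the factorization otherwise unchanged. Flipping the sign of that neighbour whenever the inserted
letter is barred keeps the parity of its factor, so only the front insertion of the barred letter
creates an odd factor. Hence the `2 (n + 1)` insertions multiply `∑ X ^ (odd factors)` by
`X + (2 n + 1)`.
-/

open Finset
open scoped Classical

lemma sPrec_iff_of_natAbs_ne {x y : ℤ} (h : x.natAbs ≠ y.natAbs) :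
    SPrec x y ↔ x.natAbs < y.natAbs := by
  unfold SPrec
  tauto

variable {n : ℕ}

lemma isLRMin_zero (w : Fin (n + 1) → ℤ) : IsLRMin w 0 :=
  fun s hs => absurd hs (Fin.not_lt_zero s)

lemma barredCount_eq_card (w : Fin n → ℤ) (m : Fin n) :
    barredCount w m = #{t | InFactor w m t ∧ w t < 0} := by
  rw [barredCount, Nat.card_eq_fintype_card, Fintype.card_subtype]

lemma numOddFactors_eq_card (w : Fin n → ℤ) :
    numOddFactors w = #{m | IsLRMin w m ∧ Odd (barredCount w m)} := by
  rw [numOddFactors, Nat.card_eq_fintype_card, Fintype.card_subtype]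

lemma numOddFactors_le (w : Fin n → ℤ) : numOddFactors w ≤ n := by
  rw [numOddFactors_eq_card]
  exact (card_filter_le _ _).trans_eq (card_fin n)

lemma numEvenFactors_le (w : Fin n → ℤ) : numEvenFactors w ≤ n := by
  rw [numEvenFactors, Nat.card_eq_fintype_card, Fintype.card_subtype]
  exact (card_filter_le _ _).trans_eq (card_fin n)

section SignInvariance

variable {w v : Fin n → ℤ}

lemma isLRMin_congr_natAbs (hinj : Function.Injective fun t => (w t).natAbs)
    (habs : ∀ t, (v t).natAbs = (w t).natAbs) (t : Fin n) :
    IsLRMin v t ↔ IsLRMin w t := by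
  refine forall₂_congr fun s hst => ?_
  have hne : (w t).natAbs ≠ (w s).natAbs := fun h => hst.ne (hinj h).symm
  rw [sPrec_iff_of_natAbs_ne hne, sPrec_iff_of_natAbs_ne (by rwa [habs, habs]), habs, habs]

lemma inFactor_congr_natAbs (hinj : Function.Injective fun t => (w t).natAbs)
    (habs : ∀ t, (v t).natAbs = (w t).natAbs) (m t : Fin n) :
    InFactor v m t ↔ InFactor w m t := by
  simp only [InFactor, isLRMin_congr_natAbs hinj habs]

end SignInvariance

section Flip

def flipAt (w : Fin n → ℤ) (k : Fin n) : Fin n → ℤ := Function.update w k (-w k)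

variable {w : Fin n → ℤ} {k m : Fin n}

@[simp]
lemma natAbs_flipAt (w : Fin n → ℤ) (k t : Fin n) : (flipAt w k t).natAbs = (w t).natAbs := by
  rcases eq_or_ne t k with rfl | h
  · simp [flipAt]
  · simp [flipAt, h]

@[simp]
lemma flipAt_flipAt (w : Fin n → ℤ) (k : Fin n) : flipAt (flipAt w k) k = w := by
  ext t
  rcases eq_or_ne t k with rfl | h
  · simp [flipAt]
  · simp [flipAt, h]

lemma IsSignedPerm.flipAt (hw : IsSignedPerm w) (k : Fin n) : IsSignedPerm (flipAt w k) := by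
  simpa [IsSignedPerm] using hw

lemma barredCount_flipAt_of_not_inFactor (hinj : Function.Injective fun t => (w t).natAbs)
    (h : ¬ InFactor w m k) : barredCount (flipAt w k) m = barredCount w m := by
  simp only [barredCount_eq_card, inFactor_congr_natAbs hinj (natAbs_flipAt w k)]
  congr 1
  ext t
  simp only [mem_filter, mem_univ, true_and, and_congr_right_iff]
  intro ht
  rw [flipAt, Function.update_of_ne (by rintro rfl; exact h ht)]

lemma barredCount_flipAt_of_pos (hinj : Function.Injective fun t => (w t).natAbs)
    (h : InFactor w m k) (hk : 0 < w k) :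
    barredCount (flipAt w k) m = barredCount w m + 1 := by
  simp only [barredCount_eq_card, inFactor_congr_natAbs hinj (natAbs_flipAt w k)]
  rw [← card_insert_of_notMem (a := k) (s := {t | InFactor w m t ∧ w t < 0}) (by simp [hk.le])]
  congr 1
  ext t
  simp only [mem_filter, mem_univ, true_and, mem_insert]
  rcases eq_or_ne t k with rfl | ht
  · simp [flipAt, h, hk]
  · simp [flipAt, ht]

lemma odd_barredCount_flipAt_iff (hw : IsSignedPerm w) (h : InFactor w m k) :
    Odd (barredCount (flipAt w k) m) ↔ ¬ Odd (barredCount w m) := by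
  rcases (Int.natAbs_pos.1 (hw.1 k).1).lt_or_gt with hneg | hpos
  · have h' : InFactor (flipAt w k) m k :=
      (inFactor_congr_natAbs hw.2 (natAbs_flipAt w k) m k).2 h
    have := barredCount_flipAt_of_pos (hw.flipAt k).2 h' (by simp [flipAt]; omega)
    rw [flipAt_flipAt] at this
    rw [this, Nat.odd_add_one, not_not]
  · rw [barredCount_flipAt_of_pos hw.2 h hpos, Nat.odd_add_one]

end Flip

lemma Fin.card_filter_univ_succAbove (p : Fin (n + 1)) (P : Fin (n + 1) → Prop)
    [DecidablePred P] : #{t | P t} = (if P p then 1 else 0) + #{s | P (p.succAbove s)} := by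
  simp only [card_filter, Fin.sum_univ_succAbove _ p]

lemma Fin.succAbove_le_self_iff (p : Fin (n + 1)) (s : Fin n) :
    p.succAbove s ≤ p ↔ s.succ ≤ p := by
  rw [(p.succAbove_ne s).le_iff_lt, Fin.succAbove_lt_iff_succ_le]

section Insertion

variable {w : Fin n → ℤ} {a : ℤ}

lemma IsSignedPerm.insertNth (hw : IsSignedPerm w) (ha : a.natAbs = n + 1) (p : Fin (n + 1)) :
    IsSignedPerm (Fin.insertNth p a w) := by
  refine ⟨(Fin.forall_iff_succAbove p).2 ⟨by simp [ha], fun s => ?_⟩, fun t₁ t₂ h => ?_⟩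
  · simpa using ⟨(hw.1 s).1, (hw.1 s).2.trans n.le_succ⟩
  · have hlt : ∀ s, (w s).natAbs ≠ a.natAbs := fun s => by have := (hw.1 s).2; omega
    induction t₁ using p.succAboveCases <;> induction t₂ using p.succAboveCases <;>
      simp_all [hw.2.eq_iff]

variable (ha : ∀ s, (w s).natAbs < a.natAbs)
include ha

lemma isLRMin_insertNth_succAbove (p : Fin (n + 1)) (s : Fin n) :
    IsLRMin (Fin.insertNth p a w) (p.succAbove s) ↔ IsLRMin w s := by
  simp only [IsLRMin, Fin.forall_iff_succAbove p, Fin.insertNth_apply_same,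
    Fin.insertNth_apply_succAbove, Fin.succAbove_lt_succAbove_iff]
  exact and_iff_right fun _ => Or.inl (ha s)

lemma isLRMin_insertNth_self (p : Fin (n + 1)) : IsLRMin (Fin.insertNth p a w) p ↔ p = 0 := by
  refine ⟨fun h => ?_, fun hp => hp ▸ isLRMin_zero _⟩
  cases p using Fin.cases with
  | zero => rfl
  | succ k =>
    have hprec := h _ Fin.castSucc_lt_succ
    rw [← Fin.succAbove_succ_self, Fin.insertNth_apply_same,
      Fin.insertNth_apply_succAbove] at hprec
    have := ha k
    unfold SPrec at hprec
    omega

lemma inFactor_insertNth_succAbove (p : Fin (n + 1)) (s t : Fin n) :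
    InFactor (Fin.insertNth p a w) (p.succAbove s) (p.succAbove t) ↔ InFactor w s t := by
  simp only [InFactor, Fin.forall_iff_succAbove p, Fin.succAbove_le_succAbove_iff,
    Fin.succAbove_lt_succAbove_iff, isLRMin_insertNth_succAbove ha, isLRMin_insertNth_self ha]
  exact and_congr_right fun _ =>
    and_iff_right fun hlt _ hp => Fin.not_lt_zero _ (hp ▸ hlt)

lemma inFactor_insertNth_succ_self (k s : Fin n) :
    InFactor (Fin.insertNth k.succ a w) (k.succ.succAbove s) k.succ ↔ InFactor w s k := by
  simp only [InFactor, Fin.forall_iff_succAbove k.succ, Fin.succAbove_le_self_iff,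
    Fin.succ_le_succ_iff, Fin.succAbove_lt_succAbove_iff, isLRMin_insertNth_succAbove ha,
    isLRMin_insertNth_self ha, Fin.succ_ne_zero, not_false_eq_true, implies_true, true_and]

lemma not_inFactor_insertNth_zero_succ (s : Fin n) :
    ¬ InFactor (Fin.insertNth 0 a w) 0 s.succ := by
  cases n with
  | zero => exact s.elim0
  | succ n =>
    refine fun h => h.2 (Fin.succ 0) (Fin.succ_pos 0) (Fin.succ_le_succ_iff.2 (Fin.zero_le s)) ?_
    rw [← Fin.zero_succAbove, isLRMin_insertNth_succAbove ha]
    exact isLRMin_zero w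

lemma barredCount_insertNth_succAbove (p : Fin (n + 1)) (s : Fin n) :
    barredCount (Fin.insertNth p a w) (p.succAbove s) =
      barredCount w s +
        if InFactor (Fin.insertNth p a w) (p.succAbove s) p ∧ a < 0 then 1 else 0 := by
  rw [barredCount_eq_card, barredCount_eq_card, Fin.card_filter_univ_succAbove p, add_comm]
  simp only [Fin.insertNth_apply_same, Fin.insertNth_apply_succAbove,
    inFactor_insertNth_succAbove ha]

lemma barredCount_insertNth_zero_self :
    barredCount (Fin.insertNth 0 a w) 0 = if a < 0 then 1 else 0 := by
  have hfirst : InFactor (Fin.insertNth 0 a w) 0 0 :=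
    ⟨le_rfl, fun _ h₁ h₂ => absurd (h₁.trans_le h₂) (lt_irrefl _)⟩
  rw [barredCount_eq_card, Fin.card_filter_univ_succAbove 0]
  simp only [Fin.zero_succAbove, not_inFactor_insertNth_zero_succ ha, false_and, filter_false,
    card_empty, add_zero, hfirst, true_and, Fin.insertNth_apply_same]

lemma numOddFactors_insertNth_zero :
    numOddFactors (Fin.insertNth 0 a w) = numOddFactors w + if a < 0 then 1 else 0 := by
  have hout : ∀ s : Fin n, ¬ InFactor (Fin.insertNth 0 a w) ((0 : Fin (n + 1)).succAbove s) 0 :=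
    fun s h => (Fin.succ_pos s).not_ge h.1
  rw [numOddFactors_eq_card, numOddFactors_eq_card, Fin.card_filter_univ_succAbove 0, add_comm]
  simp only [isLRMin_insertNth_self ha, isLRMin_insertNth_succAbove ha,
    barredCount_insertNth_zero_self ha, barredCount_insertNth_succAbove ha, hout, false_and,
    if_false, add_zero, true_and]
  by_cases hneg : a < 0 <;> simp [hneg]

lemma numOddFactors_insertNth_succ_of_nonneg (k : Fin n) (h0 : 0 ≤ a) :
    numOddFactors (Fin.insertNth k.succ a w) = numOddFactors w := by
  rw [numOddFactors_eq_card, numOddFactors_eq_card, Fin.card_filter_univ_succAbove k.succ]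
  simp [isLRMin_insertNth_self ha, isLRMin_insertNth_succAbove ha,
    barredCount_insertNth_succAbove ha, not_lt.2 h0]

lemma numOddFactors_insertNth_succ_of_neg (hw : IsSignedPerm w) (k : Fin n) (hneg : a < 0) :
    numOddFactors (Fin.insertNth k.succ a w) = numOddFactors (flipAt w k) := by
  rw [numOddFactors_eq_card, numOddFactors_eq_card, Fin.card_filter_univ_succAbove k.succ]
  simp only [isLRMin_insertNth_self ha, Fin.succ_ne_zero, false_and, if_false, zero_add,
    isLRMin_insertNth_succAbove ha, barredCount_insertNth_succAbove ha,
    inFactor_insertNth_succ_self ha, hneg, and_true,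
    isLRMin_congr_natAbs hw.2 (natAbs_flipAt w k)]
  congr 1
  ext s
  simp only [mem_filter, mem_univ, true_and, and_congr_right_iff]
  intro _
  by_cases hs : InFactor w s k
  · simp [hs, odd_barredCount_flipAt_iff hw hs, Nat.odd_add_one]
  · simp [hs, barredCount_flipAt_of_not_inFactor hw.2 hs]

end Insertion

lemma IsSignedPerm.exists_natAbs_eq {v : Fin n → ℤ} (hv : IsSignedPerm v) {m : ℕ}
    (hm₁ : 1 ≤ m) (hm : m ≤ n) : ∃ t, (v t).natAbs = m := by
  have himage : univ.image (fun t => (v t).natAbs) = Icc 1 n := by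
    refine eq_of_subset_of_card_le (fun x hx => ?_) ?_
    · obtain ⟨t, -, rfl⟩ := mem_image.1 hx
      exact mem_Icc.2 (hv.1 t)
    · rw [card_image_of_injective _ hv.2, Nat.card_Icc, card_univ, Fintype.card_fin]
      omega
  simpa using himage.ge (mem_Icc.2 ⟨hm₁, hm⟩)

lemma IsSignedPerm.removeNth {v : Fin (n + 1) → ℤ} (hv : IsSignedPerm v) {p : Fin (n + 1)}
    (hp : (v p).natAbs = n + 1) : IsSignedPerm (Fin.removeNth p v) := by
  refine ⟨fun s => ⟨(hv.1 _).1, ?_⟩, hv.2.comp Fin.succAbove_right_injective⟩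
  have hne : (v (p.succAbove s)).natAbs ≠ n + 1 := fun h =>
    p.succAbove_ne s (hv.2 (h.trans hp.symm))
  have := (hv.1 (p.succAbove s)).2
  simp only [Fin.removeNth]
  omega

noncomputable def signedPerms (n : ℕ) : Finset (Fin n → ℤ) :=
  {w ∈ Fintype.piFinset fun _ => Icc (-n : ℤ) n | IsSignedPerm w}

lemma mem_signedPerms {w : Fin n → ℤ} : w ∈ signedPerms n ↔ IsSignedPerm w := by
  simp only [signedPerms, mem_filter, Fintype.mem_piFinset, mem_Icc, and_iff_right_iff_imp]
  intro hw t
  have := (hw.1 t).2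
  omega

lemma coe_signedPerms : (signedPerms n : Set (Fin n → ℤ)) = {w | IsSignedPerm w} :=
  Set.ext fun _ => mem_signedPerms

section TopInsertion

def topLetter (n : ℕ) (b : Bool) : ℤ := if b then -(n + 1 : ℤ) else n + 1

lemma natAbs_topLetter (n : ℕ) (b : Bool) : (topLetter n b).natAbs = n + 1 := by
  cases b <;> simp [topLetter] <;> omega

lemma topLetter_neg_iff {b : Bool} : topLetter n b < 0 ↔ b := by
  cases b <;> simp [topLetter] <;> omega

lemma topLetter_decide_neg {x : ℤ} (hx : x.natAbs = n + 1) :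
    topLetter n (decide (x < 0)) = x := by
  unfold topLetter
  split_ifs <;> simp_all <;> omega

lemma topLetter_injective (n : ℕ) : Function.Injective (topLetter n) := by
  intro b₁ b₂ h
  cases b₁ <;> cases b₂ <;> simp [topLetter] at h ⊢ <;> omega

def flipBefore (w : Fin n → ℤ) (b : Bool) : Fin (n + 1) → Fin n → ℤ :=
  Fin.cases w fun k => if b then flipAt w k else w

variable {w : Fin n → ℤ} {p : Fin (n + 1)} {b : Bool}

@[simp]
lemma flipBefore_flipBefore (w : Fin n → ℤ) (b : Bool) (p : Fin (n + 1)) :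
    flipBefore (flipBefore w b p) b p = w := by
  cases p using Fin.cases <;> cases b <;> simp [flipBefore]

lemma IsSignedPerm.flipBefore (hw : IsSignedPerm w) (b : Bool) (p : Fin (n + 1)) :
    IsSignedPerm (flipBefore w b p) := by
  cases p using Fin.cases <;> cases b <;> simp [_root_.flipBefore, hw, hw.flipAt]

/-- Inserting a barred letter right after position `k` toggles the parity of the factor
containing `k`; flipping the sign of `w k` beforehand undoes this. -/
def insertTop (w : Fin n → ℤ) (p : Fin (n + 1)) (b : Bool) : Fin (n + 1) → ℤ :=
  Fin.insertNth p (topLetter n b) (flipBefore w b p)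

lemma IsSignedPerm.insertTop (hw : IsSignedPerm w) (p : Fin (n + 1)) (b : Bool) :
    IsSignedPerm (insertTop w p b) :=
  (hw.flipBefore b p).insertNth (natAbs_topLetter n b) p

lemma numOddFactors_insertTop (hw : IsSignedPerm w) (p : Fin (n + 1)) (b : Bool) :
    numOddFactors (insertTop w p b) = numOddFactors w + if p = 0 ∧ b then 1 else 0 := by
  have ha : ∀ u : Fin n → ℤ, IsSignedPerm u →
      ∀ s, (u s).natAbs < (topLetter n b).natAbs :=
    fun u hu s => natAbs_topLetter n b ▸ Nat.lt_succ_of_le (hu.1 s).2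
  cases p using Fin.cases with
  | zero =>
    rw [insertTop, flipBefore, Fin.cases_zero, numOddFactors_insertNth_zero (ha w hw)]
    simp [topLetter_neg_iff]
  | succ k =>
    cases b with
    | false =>
      simp [insertTop, flipBefore,
        numOddFactors_insertNth_succ_of_nonneg (ha w hw) k (by simp [topLetter]; omega)]
    | true =>
      simp [insertTop, flipBefore, numOddFactors_insertNth_succ_of_neg (ha _ (hw.flipAt k))
        (hw.flipAt k) k (topLetter_neg_iff.2 rfl)]

lemma insertTop_eq_iff {v : Fin (n + 1) → ℤ} :
    insertTop w p b = v ↔ topLetter n b = v p ∧ w = flipBefore (Fin.removeNth p v) b p := by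
  rw [insertTop, Fin.insertNth_eq_iff]
  exact and_congr_right fun _ =>
    ⟨fun h => by rw [← h, flipBefore_flipBefore], fun h => by rw [h, flipBefore_flipBefore]⟩

lemma insertTop_injOn :
    Set.InjOn (fun x : (Fin n → ℤ) × Fin (n + 1) × Bool => insertTop x.1 x.2.1 x.2.2)
      {x | IsSignedPerm x.1} := by
  rintro ⟨w₁, p₁, b₁⟩ (hw₁ : IsSignedPerm w₁) ⟨w₂, p₂, b₂⟩ -
    (h : insertTop w₁ p₁ b₁ = insertTop w₂ p₂ b₂)
  have hv₁ := insertTop_eq_iff.1 h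
  have hv₂ := insertTop_eq_iff.1 (rfl : insertTop w₂ p₂ b₂ = _)
  obtain rfl : p₁ = p₂ := (h ▸ hw₁.insertTop p₁ b₁ :).2 <| by
    simp only [← hv₁.1, ← hv₂.1, natAbs_topLetter]
  obtain rfl : b₁ = b₂ := topLetter_injective n (hv₁.1.trans hv₂.1.symm)
  rw [hv₁.2.trans hv₂.2.symm]

lemma insertTop_surjOn :
    Set.SurjOn (fun x : (Fin n → ℤ) × Fin (n + 1) × Bool => insertTop x.1 x.2.1 x.2.2)
      {x | IsSignedPerm x.1} {v | IsSignedPerm v} := by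
  intro v hv
  obtain ⟨p, hp⟩ := IsSignedPerm.exists_natAbs_eq hv n.succ_pos le_rfl
  refine ⟨(flipBefore (Fin.removeNth p v) (decide (v p < 0)) p, p, decide (v p < 0)),
    (hv.removeNth hp).flipBefore _ p, insertTop_eq_iff.2 ⟨topLetter_decide_neg hp, rfl⟩⟩

lemma sum_signedPerms_succ {M : Type*} [AddCommMonoid M] (f : (Fin (n + 1) → ℤ) → M) :
    ∑ v ∈ signedPerms (n + 1), f v =
      ∑ w ∈ signedPerms n, ∑ x : Fin (n + 1) × Bool, f (insertTop w x.1 x.2) := by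
  have hdom : ((signedPerms n ×ˢ univ : Finset ((Fin n → ℤ) × Fin (n + 1) × Bool)) :
      Set ((Fin n → ℤ) × Fin (n + 1) × Bool)) = {x | IsSignedPerm x.1} := by
    ext; simp [mem_signedPerms]
  rw [← sum_product']
  symm
  refine sum_nbij (fun x => insertTop x.1 x.2.1 x.2.2) (fun x hx => ?_) (hdom ▸ insertTop_injOn)
    (by simpa only [hdom, coe_signedPerms] using insertTop_surjOn) fun _ _ => rfl
  exact mem_signedPerms.2 ((mem_signedPerms.1 (mem_product.1 hx).1).insertTop _ _)

end TopInsertion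

open Polynomial

lemma sum_X_pow_insertTop_weight (n : ℕ) :
    ∑ x : Fin (n + 1) × Bool, (X : ℤ[X]) ^ (if x.1 = 0 ∧ x.2 then 1 else 0) =
      X + C (2 * (n : ℤ) + 1) := by
  simp [Fintype.sum_prod_type, Fin.sum_univ_succ, Fin.succ_ne_zero]
  ring

theorem sum_signedPerms_X_pow_numOddFactors (n : ℕ) :
    ∑ w ∈ signedPerms n, (X : ℤ[X]) ^ numOddFactors w =
      ∏ i ∈ range n, (X + C (2 * (i : ℤ) + 1)) := by
  induction n with
  | zero =>
    simp [signedPerms, numOddFactors_eq_card, IsSignedPerm, Function.injective_of_subsingleton]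
  | succ n ih =>
    rw [sum_signedPerms_succ, prod_range_succ, ← ih, sum_mul]
    refine sum_congr rfl fun w hw => ?_
    simp only [numOddFactors_insertTop (mem_signedPerms.1 hw), pow_add, ← mul_sum,
      sum_X_pow_insertTop_weight]

lemma bigC_eq_card (n k kb : ℕ) :
    bigC n k kb = #{w ∈ signedPerms n | numOddFactors w = k ∧ numEvenFactors w = kb} := by
  rw [bigC, ← Nat.card_eq_finsetCard]
  exact Nat.card_congr (Equiv.subtypeEquivRight fun w => by simp [mem_signedPerms])

lemma sum_bigC (n k : ℕ) :
    ∑ kb ∈ range (n + 1), bigC n k kb = #{w ∈ signedPerms n | numOddFactors w = k} := by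
  rw [card_eq_sum_card_fiberwise (f := numEvenFactors) (t := range (n + 1))
    fun w _ => mem_range.2 (Nat.lt_succ_of_le (numEvenFactors_le w))]
  simp only [bigC_eq_card, filter_filter]

/-- for every `n`, in `ℤ[X]`:
`Σ_{k,k̄} C(n,k,k̄)·X^k = (X+1)(X+3)⋯(X+2n−1) = ∏_{i=0}^{n−1}(X+2i+1)`.
(The sums are finite; `C(n,k,k̄) = 0` for `k + k̄ > n`, so summing `k` and `k̄` over
`0,…,n` captures every nonzero term. For `n = 0` both sides equal `1`.) -/
theorem bigC_total_generating_function (n : ℕ) :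
    ∑ k ∈ Finset.range (n + 1), ∑ kb ∈ Finset.range (n + 1),
        Polynomial.C (bigC n k kb : ℤ) * Polynomial.X ^ k =
      ∏ i ∈ Finset.range n, (Polynomial.X + Polynomial.C (2 * (i : ℤ) + 1)) := by
  rw [← sum_signedPerms_X_pow_numOddFactors, ← sum_fiberwise_of_maps_to
    fun w _ => mem_range.2 (Nat.lt_succ_of_le (numOddFactors_le w))]
  refine sum_congr rfl fun k _ => ?_
  rw [← sum_mul, ← map_sum, ← Nat.cast_sum, sum_bigC, sum_congr rfl fun w hw => by
    rw [(mem_filter.1 hw).2], sum_const, nsmul_eq_mul, C_eq_natCast]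
end

section
/- For every natural number n ≥ 1 and every signed permutation w of n, Σ_{1 ≤ i < j ≤ n} f̃_ij(w) = (n − 1) − 2·des(w). (This is the identity underlying the fact that the normalised descent statistic is an eigenfunction of the riffle-shuffles with flip.) -/
open scoped Classical

/-- The number of descents of `w`: positions `t` with `w t > w (t+1)` (usual integer
order). -/
noncomputable def des {n : ℕ} (w : Fin n → ℤ) : ℕ :=
  Nat.card { t : Fin n // ∃ h : (t : ℕ) + 1 < n, w ⟨(t : ℕ) + 1, h⟩ < w t }

/-- `w` contains the consecutive pair `(x, y)`. -/
def HasPair {n : ℕ} (w : Fin n → ℤ) (x y : ℤ) : Prop :=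
  ∃ t : Fin n, ∃ h : (t : ℕ) + 1 < n, w t = x ∧ w ⟨(t : ℕ) + 1, h⟩ = y

/-- The statistic `f̃_ij(w)`: `1` if `w` contains a consecutive pair `(i,j)`, `(−i,j)`,
`(−j,i)` or `(−j,−i)`; `−1` if `w` contains a consecutive pair `(j,i)`, `(j,−i)`,
`(i,−j)` or `(−i,−j)`; and `0` otherwise. -/
noncomputable def ftilde {n : ℕ} (w : Fin n → ℤ) (i j : ℤ) : ℤ :=
  if HasPair w i j ∨ HasPair w (-i) j ∨ HasPair w (-j) i ∨ HasPair w (-j) (-i) then 1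
  else if HasPair w j i ∨ HasPair w j (-i) ∨ HasPair w i (-j) ∨ HasPair w (-i) (-j) then -1
  else 0

/-!
The four "positive" patterns in the definition of `f̃_ij` are exactly the ascents `w_t < w_{t+1}`
with `{|w_t|, |w_{t+1}|} = {i, j}`, and the four "negative" ones exactly the descents. Since the
absolute values are distinct, different steps carry different pairs `{i, j}`, so `f̃_ij(w)` is the
sign `±1` of the unique step carrying `{i, j}` (or `0`). Summing over `i < j` therefore sums these
signs over all `n - 1` steps, giving `(n - 1) - 2 des(w)`.
-/

open Finset

def absPair (x y : ℤ) : ℕ × ℕ := (min x.natAbs y.natAbs, max x.natAbs y.natAbs)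

lemma ascent_patterns_iff {i j : ℕ} (hi : 0 < i) (hij : i < j) (x y : ℤ) :
    ((x = i ∧ y = j) ∨ (x = -i ∧ y = j) ∨ (x = -j ∧ y = i) ∨ (x = -j ∧ y = -i)) ↔
      absPair x y = (i, j) ∧ x < y := by
  simp only [absPair, Prod.ext_iff]
  omega

lemma descent_patterns_iff {i j : ℕ} (hi : 0 < i) (hij : i < j) (x y : ℤ) :
    ((x = j ∧ y = i) ∨ (x = j ∧ y = -i) ∨ (x = i ∧ y = -j) ∨ (x = -i ∧ y = -j)) ↔
      absPair x y = (i, j) ∧ ¬ x < y := by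
  simp only [absPair, Prod.ext_iff]
  omega

lemma ite_exists_eq_sum_filter {ι : Type*} [Fintype ι] {q p : ι → Prop} [DecidablePred q]
    [DecidablePred p] [Decidable (∃ t, q t ∧ p t)] [Decidable (∃ t, q t ∧ ¬ p t)]
    (hq : ∀ s t, q s → q t → s = t) :
    (if ∃ t, q t ∧ p t then (1 : ℤ) else if ∃ t, q t ∧ ¬ p t then -1 else 0) =
      ∑ t with q t, if p t then 1 else -1 := by
  by_cases hne : ∃ a, q a
  · obtain ⟨a, ha⟩ := hne
    have hfilter : ({t | q t} : Finset ι) = {a} := by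
      ext t
      simp only [mem_filter_univ, mem_singleton]
      exact ⟨fun ht => hq t a ht ha, fun h => h ▸ ha⟩
    by_cases h : p a
    · rw [if_pos ⟨a, ha, h⟩, hfilter, sum_singleton, if_pos h]
    · rw [if_neg fun ⟨t, ht, hpt⟩ => h (hq t a ht ha ▸ hpt), if_pos ⟨a, ha, h⟩, hfilter,
        sum_singleton, if_neg h]
  · simp only [not_exists] at hne
    rw [if_neg fun ⟨t, ht, _⟩ => hne t ht, if_neg fun ⟨t, ht, _⟩ => hne t ht,
      filter_false_of_mem fun t _ => hne t, sum_empty]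

lemma sum_ite_lt_eq_card_sub {ι α : Type*} [Fintype ι] [LinearOrder α] {x y : ι → α}
    (hxy : ∀ t, x t ≠ y t) :
    ∑ t, (if x t < y t then (1 : ℤ) else -1) = Fintype.card ι - 2 * #{t | y t < x t} := by
  rw [card_filter, Fintype.card_eq_sum_ones]
  push_cast
  rw [mul_sum, ← sum_sub_distrib]
  refine sum_congr rfl fun t _ => ?_
  rcases (hxy t).lt_or_gt with h | h <;> simp [h, h.not_gt]

section Steps

variable {m : ℕ} {w : Fin (m + 1) → ℤ}

lemma hasPair_iff_exists (x y : ℤ) :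
    HasPair w x y ↔ ∃ t : Fin m, w t.castSucc = x ∧ w t.succ = y := by
  constructor
  · rintro ⟨t, ht, hx, hy⟩
    exact ⟨⟨t, by omega⟩, hx, hy⟩
  · rintro ⟨t, hx, hy⟩
    exact ⟨t.castSucc, by simp, hx, hy⟩

lemma des_eq_card_filter : des w = #{t : Fin m | w t.succ < w t.castSucc} := by
  rw [des, ← Fintype.card_subtype, Nat.card_eq_fintype_card]
  exact Fintype.card_congr
    { toFun := fun t => ⟨⟨t.1, Nat.lt_of_succ_lt_succ t.2.1⟩, t.2.2⟩
      invFun := fun t => ⟨t.1.castSucc, by simp, t.2⟩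
      left_inv := fun _ => rfl
      right_inv := fun _ => rfl }

lemma IsSignedPerm.natAbs_castSucc_ne_natAbs_succ (hw : IsSignedPerm w) (t : Fin m) :
    (w t.castSucc).natAbs ≠ (w t.succ).natAbs :=
  fun h => (Fin.castSucc_lt_succ (i := t)).ne (hw.2 h)

lemma IsSignedPerm.castSucc_ne_succ (hw : IsSignedPerm w) (t : Fin m) :
    w t.castSucc ≠ w t.succ :=
  fun h => hw.natAbs_castSucc_ne_natAbs_succ t (congrArg Int.natAbs h)

def stepAbsPair (w : Fin (m + 1) → ℤ) (t : Fin m) : ℕ × ℕ :=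
  absPair (w t.castSucc) (w t.succ)

lemma IsSignedPerm.stepAbsPair_injective (hw : IsSignedPerm w) :
    Function.Injective (stepAbsPair w) := by
  intro s t hst
  have hne := hw.natAbs_castSucc_ne_natAbs_succ s
  simp only [stepAbsPair, absPair, Prod.ext_iff] at hst
  rcases (by omega : (w s.castSucc).natAbs = (w t.castSucc).natAbs ∨
      ((w s.castSucc).natAbs = (w t.succ).natAbs ∧ (w s.succ).natAbs = (w t.castSucc).natAbs))
    with h | ⟨h₁, h₂⟩
  · exact Fin.castSucc_injective _ (hw.2 h)
  · have h₁ := congrArg Fin.val (hw.2 h₁)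
    have h₂ := congrArg Fin.val (hw.2 h₂)
    simp only [Fin.val_castSucc, Fin.val_succ] at h₁ h₂
    omega

lemma IsSignedPerm.stepAbsPair_mem (hw : IsSignedPerm w) (t : Fin m) :
    stepAbsPair w t ∈ {p ∈ Icc 1 (m + 1) ×ˢ Icc 1 (m + 1) | p.1 < p.2} := by
  have hne := hw.natAbs_castSucc_ne_natAbs_succ t
  have h₁ := hw.1 t.castSucc
  have h₂ := hw.1 t.succ
  simp only [stepAbsPair, absPair, mem_filter, mem_product, mem_Icc]
  omega

lemma IsSignedPerm.ftilde_eq_sum (hw : IsSignedPerm w) {i j : ℕ} (hi : 0 < i) (hij : i < j) :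
    ftilde w i j =
      ∑ t with stepAbsPair w t = (i, j), if w t.castSucc < w t.succ then 1 else -1 := by
  rw [ftilde]
  simp only [hasPair_iff_exists, ← exists_or, ascent_patterns_iff hi hij,
    descent_patterns_iff hi hij]
  exact ite_exists_eq_sum_filter fun s t hs ht => hw.stepAbsPair_injective (hs.trans ht.symm)

end Steps

/-- for every `n ≥ 1` and every signed permutation `w` of `n`,
`Σ_{1 ≤ i < j ≤ n} f̃_ij(w) = (n − 1) − 2·des(w)`. -/
theorem sum_ftilde_eq (n : ℕ) (hn : 1 ≤ n) (w : Fin n → ℤ) (hw : IsSignedPerm w) :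
    (∑ i ∈ Finset.Icc 1 n, ∑ j ∈ Finset.Icc 1 n,
        if i < j then ftilde w (i : ℤ) (j : ℤ) else 0) =
      ((n : ℤ) - 1) - 2 * des w := by
  obtain ⟨m, rfl⟩ := Nat.exists_eq_add_of_le' hn
  calc (∑ i ∈ Icc 1 (m + 1), ∑ j ∈ Icc 1 (m + 1), if i < j then ftilde w i j else 0)
      = ∑ p ∈ Icc 1 (m + 1) ×ˢ Icc 1 (m + 1) with p.1 < p.2,
          ∑ t with stepAbsPair w t = p, if w t.castSucc < w t.succ then 1 else -1 := by
        rw [sum_filter, sum_product]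
        refine sum_congr rfl fun i hi => sum_congr rfl fun j _ => ?_
        split_ifs with hij
        · exact hw.ftilde_eq_sum (mem_Icc.mp hi).1 hij
        · rfl
    _ = ∑ t : Fin m, if w t.castSucc < w t.succ then 1 else -1 :=
        sum_fiberwise_of_maps_to (fun t _ => hw.stepAbsPair_mem t) _
    _ = m - 2 * #{t : Fin m | w t.succ < w t.castSucc} := by
        rw [sum_ite_lt_eq_card_sub hw.castSucc_ne_succ, Fintype.card_fin]
    _ = ((m + 1 : ℕ) : ℤ) - 1 - 2 * des w := by
        rw [des_eq_card_filter]
        push_cast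
        ring
end
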